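/- Let $N \ge 1$, let $I_d \subseteq \{1,\dots,N\}$ be a nonempty set of indices, let $L_1, \dots, L_N > 0$ and let $k_1, \dots, k_N$ be nonzero real numbers with $\sum_{l \in I_d} k_l / L_l \ne 0$. Then for every tuple of continuous functions $f_j : [0,L_j] \to \mathbb{R}$ there exists a unique tuple $(\psi_1,\dots,\psi_N)$ of twice continuously differentiable functions $\psi_j : [0,L_j] \to \mathbb{R}$ satisfying: $-k_j \psi_j'' = f_j$ on $[0,L_j]$ for all $j$; $\psi_j(0) = 0$ for $j \in I_d$; $\psi_j'(0) = 0$ for $j \notin I_d$; $\psi_l(L_l) = \psi_m(L_m)$ for all $1 \le l, m \le N$; and $\sum_{l=1}^{N} k_l \psi_l'(L_l) = 0$. -/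

import Mathlib

/-!
On edge `j` the equation reads `ψ'' = -f/k`, so every solution is a fixed double primitive of
`-f/k` plus an affine function. The external condition removes one of its two constants, and the
common value `c` at the internal vertex determines the other. The derivative at the vertex then
depends on `c` only on Dirichlet edges, through `c / L j`, so Kirchhoff's condition is affine in
`c` with slope `∑_{l ∈ Id} k l / L l` and has exactly one root.
-/

/-- Classical solution of the general mixed star-network problem on `N` edges, edge `j` of
length `L j` with conductivity `k j`: Dirichlet condition `ψ j 0 = 0` for `j ∈ Id`,
Neumann condition `ψ j ' 0 = 0` for the other edges, continuity and Kirchhoff conditions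
at the internal vertex (`x = L j` on edge `j`). -/
def IsGeneralMixedStarSolution (N : ℕ) (Id : Finset ℕ) (L : ℕ → ℝ) (k : ℕ → ℝ)
    (f : ℕ → ℝ → ℝ) (ψ : ℕ → ℝ → ℝ) : Prop :=
  (∀ j ∈ Finset.Icc 1 N, ContDiffOn ℝ 2 (ψ j) (Set.Icc 0 (L j))) ∧
  (∀ j ∈ Finset.Icc 1 N, ∀ x ∈ Set.Icc 0 (L j),
      -(k j * iteratedDerivWithin 2 (ψ j) (Set.Icc 0 (L j)) x) = f j x) ∧
  (∀ j ∈ Finset.Icc 1 N, j ∈ Id → ψ j 0 = 0) ∧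
  (∀ j ∈ Finset.Icc 1 N, j ∉ Id → derivWithin (ψ j) (Set.Icc 0 (L j)) 0 = 0) ∧
  (∀ l ∈ Finset.Icc 1 N, ∀ m ∈ Finset.Icc 1 N, ψ l (L l) = ψ m (L m)) ∧
  (∑ l ∈ Finset.Icc 1 N, k l * derivWithin (ψ l) (Set.Icc 0 (L l)) (L l) = 0)

open Set

universe uX uY

lemma ContinuousOn.exists_continuous_eqOn {X : Type uX} {Y : Type uY} [TopologicalSpace X]
    [NormalSpace X] [TopologicalSpace Y] [TietzeExtension.{uX, uY} Y] {s : Set X} {f : X → Y}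
    (hs : IsClosed s) (hf : ContinuousOn f s) : ∃ g : X → Y, Continuous g ∧ EqOn g f s := by
  obtain ⟨g, hg⟩ := ContinuousMap.exists_restrict_eq hs ⟨s.domRestrict f, hf.domRestrict⟩
  exact ⟨g, g.continuous, fun x hx => congr($hg ⟨x, hx⟩)⟩

noncomputable def primitive (u : ℝ → ℝ) (x : ℝ) : ℝ := ∫ t in (0 : ℝ)..x, u t

section Primitive

variable {u : ℝ → ℝ}

@[simp]
lemma primitive_zero : primitive u 0 = 0 := intervalIntegral.integral_same

lemma hasDerivAt_primitive (hu : Continuous u) (x : ℝ) : HasDerivAt (primitive u) (u x) x :=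
  (hu.integral_hasStrictDerivAt 0 x).hasDerivAt

lemma differentiable_primitive (hu : Continuous u) : Differentiable ℝ (primitive u) :=
  fun x => (hasDerivAt_primitive hu x).differentiableAt

lemma deriv_primitive (hu : Continuous u) : deriv (primitive u) = u :=
  funext fun x => (hasDerivAt_primitive hu x).deriv

lemma contDiff_two_primitive_primitive (hu : Continuous u) :
    ContDiff ℝ 2 (primitive (primitive u)) := by
  have hu' := (differentiable_primitive hu).continuous
  rw [show (2 : WithTop ℕ∞) = 1 + 1 from rfl, contDiff_succ_iff_deriv, deriv_primitive hu',
    contDiff_one_iff_deriv, deriv_primitive hu]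
  exact ⟨differentiable_primitive hu', by simp, differentiable_primitive hu, hu⟩

end Primitive

noncomputable def edgeProfile (a b : ℝ) (u : ℝ → ℝ) (x : ℝ) : ℝ :=
  a + b * x + primitive (primitive u) x

section EdgeProfile

variable {a b L : ℝ} {u : ℝ → ℝ}

@[simp]
lemma edgeProfile_zero : edgeProfile a b u 0 = a := by simp [edgeProfile]

lemma hasDerivAt_edgeProfile (hu : Continuous u) (x : ℝ) :
    HasDerivAt (edgeProfile a b u) (b + primitive u x) x :=
  ((((hasDerivAt_id' x).const_mul b).const_add a).add
    (hasDerivAt_primitive (differentiable_primitive hu).continuous x)).congr_deriv (by rw [mul_one])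

lemma contDiff_edgeProfile (hu : Continuous u) : ContDiff ℝ 2 (edgeProfile a b u) :=
  (contDiff_const.add (contDiff_const.mul contDiff_id)).add (contDiff_two_primitive_primitive hu)

lemma derivWithin_edgeProfile (hL : 0 < L) (hu : Continuous u) {x : ℝ} (hx : x ∈ Icc 0 L) :
    derivWithin (edgeProfile a b u) (Icc 0 L) x = b + primitive u x :=
  (hasDerivAt_edgeProfile hu x).hasDerivWithinAt.derivWithin (uniqueDiffOn_Icc hL x hx)

lemma iteratedDerivWithin_two_edgeProfile (hL : 0 < L) (hu : Continuous u) {x : ℝ}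
    (hx : x ∈ Icc 0 L) : iteratedDerivWithin 2 (edgeProfile a b u) (Icc 0 L) x = u x := by
  rw [iteratedDerivWithin_eq_iterate, Function.iterate_succ_apply', Function.iterate_one,
    derivWithin_congr (fun y hy => derivWithin_edgeProfile hL hu hy)
      (derivWithin_edgeProfile hL hu hx)]
  exact ((hasDerivAt_primitive hu x).const_add b).hasDerivWithinAt.derivWithin
    (uniqueDiffOn_Icc hL x hx)

lemma eqOn_edgeProfile (hL : 0 < L) (hu : Continuous u) {φ : ℝ → ℝ}
    (hφ : ContDiffOn ℝ 2 φ (Icc 0 L))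
    (hφu : ∀ x ∈ Icc 0 L, iteratedDerivWithin 2 φ (Icc 0 L) x = u x) :
    EqOn φ (edgeProfile (φ 0) (derivWithin φ (Icc 0 L) 0) u) (Icc 0 L) := by
  have hs := uniqueDiffOn_Icc hL
  have hφ' : EqOn (derivWithin φ (Icc 0 L))
      (fun x => derivWithin φ (Icc 0 L) 0 + primitive u x) (Icc 0 L) := by
    refine eq_of_derivWithin_eq ((hφ.derivWithin hs (m := 1) le_rfl).differentiableOn one_ne_zero)
      ((differentiable_primitive hu).const_add _).differentiableOn (fun x hx => ?_) (by simp)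
    have hx' := Ico_subset_Icc_self hx
    rw [((hasDerivAt_primitive hu x).const_add _).hasDerivWithinAt.derivWithin (hs x hx'),
      ← hφu x hx', iteratedDerivWithin_eq_iterate, Function.iterate_succ_apply',
      Function.iterate_one]
  refine eq_of_derivWithin_eq (hφ.differentiableOn two_ne_zero)
    ((contDiff_edgeProfile hu).differentiable two_ne_zero).differentiableOn
    (fun x hx => ?_) edgeProfile_zero.symm
  rw [hφ' (Ico_subset_Icc_self hx), derivWithin_edgeProfile hL hu (Ico_subset_Icc_self hx)]

end EdgeProfile

noncomputable def starProfile (Id : Finset ℕ) (L : ℕ → ℝ) (u : ℕ → ℝ → ℝ) (c : ℝ)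
    (j : ℕ) : ℝ → ℝ :=
  if j ∈ Id then edgeProfile 0 ((c - primitive (primitive (u j)) (L j)) / L j) (u j)
  else edgeProfile (c - primitive (primitive (u j)) (L j)) 0 (u j)

-- Kirchhoff's condition for `starProfile Id L u c` reads `c * ∑ l ∈ Id, k l / L l = vertexLoad …`.
noncomputable def vertexLoad (N : ℕ) (Id : Finset ℕ) (L k : ℕ → ℝ) (u : ℕ → ℝ → ℝ) :
    ℝ :=
  ∑ l ∈ Id, k l * primitive (primitive (u l)) (L l) / L l -
    ∑ l ∈ Finset.Icc 1 N, k l * primitive (u l) (L l)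

section StarProfile

variable {N : ℕ} {Id : Finset ℕ} {L k : ℕ → ℝ} {u f : ℕ → ℝ → ℝ} {c : ℝ} {j : ℕ}

variable (Id L u c j) in
lemma exists_starProfile_eq_edgeProfile :
    ∃ a b, starProfile Id L u c j = edgeProfile a b (u j) := by
  unfold starProfile
  split_ifs <;> exact ⟨_, _, rfl⟩

lemma starProfile_apply_length (hL : L j ≠ 0) : starProfile Id L u c j (L j) = c := by
  unfold starProfile edgeProfile
  split_ifs
  · field_simp
    ring
  · ring

lemma starProfile_apply_zero (hj : j ∈ Id) : starProfile Id L u c j 0 = 0 := by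
  simp [starProfile, hj]

lemma derivWithin_starProfile (hL : 0 < L j) (hu : Continuous (u j)) {x : ℝ}
    (hx : x ∈ Icc 0 (L j)) :
    derivWithin (starProfile Id L u c j) (Icc 0 (L j)) x =
      (if j ∈ Id then (c - primitive (primitive (u j)) (L j)) / L j else 0) +
        primitive (u j) x := by
  unfold starProfile
  split_ifs <;> exact derivWithin_edgeProfile hL hu hx

lemma sum_flux_starProfile (hId : Id ⊆ Finset.Icc 1 N) (hL : ∀ j ∈ Finset.Icc 1 N, 0 < L j)
    (hu : ∀ j ∈ Finset.Icc 1 N, Continuous (u j)) :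
    ∑ l ∈ Finset.Icc 1 N, k l * derivWithin (starProfile Id L u c l) (Icc 0 (L l)) (L l) =
      c * ∑ l ∈ Id, k l / L l - vertexLoad N Id L k u := by
  have hDirichlet : ∑ l ∈ Finset.Icc 1 N,
      k l * (if l ∈ Id then (c - primitive (primitive (u l)) (L l)) / L l else 0) =
      ∑ l ∈ Id, (c * (k l / L l) - k l * primitive (primitive (u l)) (L l) / L l) := by
    rw [← Finset.sum_subset hId fun l _ hl => by rw [if_neg hl, mul_zero]]
    refine Finset.sum_congr rfl fun l hl => ?_
    rw [if_pos hl]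
    ring
  rw [Finset.sum_congr rfl fun l hl => by
      rw [derivWithin_starProfile (hL l hl) (hu l hl) (right_mem_Icc.2 (hL l hl).le), mul_add],
    Finset.sum_add_distrib, hDirichlet, Finset.sum_sub_distrib, ← Finset.mul_sum, vertexLoad]
  ring

lemma eqOn_starProfile_of_iteratedDerivWithin (hL : 0 < L j) (hu : Continuous (u j))
    {φ : ℝ → ℝ} (hφ : ContDiffOn ℝ 2 φ (Icc 0 (L j)))
    (hφu : ∀ x ∈ Icc 0 (L j), iteratedDerivWithin 2 φ (Icc 0 (L j)) x = u j x)
    (hDirichlet : j ∈ Id → φ 0 = 0)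
    (hNeumann : j ∉ Id → derivWithin φ (Icc 0 (L j)) 0 = 0) (hc : φ (L j) = c) :
    EqOn φ (starProfile Id L u c j) (Icc 0 (L j)) := by
  have hE := eqOn_edgeProfile hL hu hφ hφu
  have hcE := hc ▸ hE (right_mem_Icc.2 hL.le)
  unfold edgeProfile at hcE
  by_cases hj : j ∈ Id
  · have ha := hDirichlet hj
    have hb : derivWithin φ (Icc 0 (L j)) 0 = (c - primitive (primitive (u j)) (L j)) / L j := by
      rw [eq_div_iff hL.ne']
      linarith
    rw [ha, hb] at hE
    simpa [starProfile, hj] using hE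
  · have hb := hNeumann hj
    have ha : φ 0 = c - primitive (primitive (u j)) (L j) := by
      rw [hb] at hcE
      linarith
    rw [ha, hb] at hE
    simpa [starProfile, hj] using hE

lemma isGeneralMixedStarSolution_starProfile (hId : Id ⊆ Finset.Icc 1 N)
    (hL : ∀ j ∈ Finset.Icc 1 N, 0 < L j) (hu : ∀ j ∈ Finset.Icc 1 N, Continuous (u j))
    (hfu : ∀ j ∈ Finset.Icc 1 N, ∀ x ∈ Icc 0 (L j), -(k j * u j x) = f j x)
    (hc : c * ∑ l ∈ Id, k l / L l = vertexLoad N Id L k u) :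
    IsGeneralMixedStarSolution N Id L k f (starProfile Id L u c) := by
  refine ⟨fun j hj => ?_, fun j hj x hx => ?_, fun j _ hj => starProfile_apply_zero hj,
    fun j hj hj' => ?_, fun l hl m hm => ?_, ?_⟩
  · obtain ⟨a, b, h⟩ := exists_starProfile_eq_edgeProfile Id L u c j
    rw [h]
    exact (contDiff_edgeProfile (hu j hj)).contDiffOn
  · obtain ⟨a, b, h⟩ := exists_starProfile_eq_edgeProfile Id L u c j
    rw [h, iteratedDerivWithin_two_edgeProfile (hL j hj) (hu j hj) hx]
    exact hfu j hj x hx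
  · rw [derivWithin_starProfile (hL j hj) (hu j hj) (left_mem_Icc.2 (hL j hj).le), if_neg hj',
      primitive_zero, add_zero]
  · rw [starProfile_apply_length (hL l hl).ne', starProfile_apply_length (hL m hm).ne']
  · rw [sum_flux_starProfile hId hL hu, hc, sub_self]

namespace IsGeneralMixedStarSolution

variable {φ : ℕ → ℝ → ℝ}

lemma eqOn_starProfile (hφ : IsGeneralMixedStarSolution N Id L k f φ)
    (hL : ∀ j ∈ Finset.Icc 1 N, 0 < L j) (hk : ∀ j ∈ Finset.Icc 1 N, k j ≠ 0)
    (hu : ∀ j ∈ Finset.Icc 1 N, Continuous (u j))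
    (hfu : ∀ j ∈ Finset.Icc 1 N, ∀ x ∈ Icc 0 (L j), -(k j * u j x) = f j x)
    (hj : j ∈ Finset.Icc 1 N) :
    ∀ l ∈ Finset.Icc 1 N, EqOn (φ l) (starProfile Id L u (φ j (L j)) l) (Icc 0 (L l)) := by
  obtain ⟨hC, hE, hD, hN, hV, -⟩ := hφ
  intro l hl
  refine eqOn_starProfile_of_iteratedDerivWithin (hL l hl) (hu l hl) (hC l hl) (fun x hx => ?_)
    (hD l hl) (hN l hl) (hV l hl j hj)
  exact mul_left_cancel₀ (hk l hl) (neg_injective ((hE l hl x hx).trans (hfu l hl x hx).symm))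

lemma vertex_mul_eq_vertexLoad (hφ : IsGeneralMixedStarSolution N Id L k f φ)
    (hId : Id ⊆ Finset.Icc 1 N) (hL : ∀ j ∈ Finset.Icc 1 N, 0 < L j)
    (hk : ∀ j ∈ Finset.Icc 1 N, k j ≠ 0) (hu : ∀ j ∈ Finset.Icc 1 N, Continuous (u j))
    (hfu : ∀ j ∈ Finset.Icc 1 N, ∀ x ∈ Icc 0 (L j), -(k j * u j x) = f j x)
    (hj : j ∈ Finset.Icc 1 N) :
    φ j (L j) * ∑ l ∈ Id, k l / L l = vertexLoad N Id L k u := by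
  have hφψ := hφ.eqOn_starProfile hL hk hu hfu hj
  obtain ⟨-, -, -, -, -, hKirchhoff⟩ := hφ
  rw [Finset.sum_congr rfl fun l hl => by
      rw [derivWithin_congr (hφψ l hl) (hφψ l hl (right_mem_Icc.2 (hL l hl).le))],
    sum_flux_starProfile hId hL hu] at hKirchhoff
  linarith

end IsGeneralMixedStarSolution

end StarProfile

theorem stmt_7_general (N : ℕ) (Id : Finset ℕ) (hId : Id ⊆ Finset.Icc 1 N)
    (L : ℕ → ℝ) (hL : ∀ j ∈ Finset.Icc 1 N, 0 < L j)
    (k : ℕ → ℝ) (hk : ∀ j ∈ Finset.Icc 1 N, k j ≠ 0)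
    (hres : ∑ l ∈ Id, k l / L l ≠ 0)
    (f : ℕ → ℝ → ℝ) (hf : ∀ j ∈ Finset.Icc 1 N, ContinuousOn (f j) (Set.Icc 0 (L j))) :
    ∃ ψ : ℕ → ℝ → ℝ, IsGeneralMixedStarSolution N Id L k f ψ ∧
      ∀ φ : ℕ → ℝ → ℝ, IsGeneralMixedStarSolution N Id L k f φ →
        ∀ j ∈ Finset.Icc 1 N, ∀ x ∈ Set.Icc (0 : ℝ) (L j), φ j x = ψ j x := by
  choose! g hg using fun j (hj : j ∈ Finset.Icc 1 N) =>
    (hf j hj).exists_continuous_eqOn isClosed_Icc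
  set u : ℕ → ℝ → ℝ := fun j x => -g j x / k j
  have hu : ∀ j ∈ Finset.Icc 1 N, Continuous (u j) := fun j hj => (hg j hj).1.neg.div_const _
  have hfu : ∀ j ∈ Finset.Icc 1 N, ∀ x ∈ Icc 0 (L j), -(k j * u j x) = f j x := by
    intro j hj x hx
    rw [mul_div_cancel₀ _ (hk j hj), neg_neg, (hg j hj).2 hx]
  refine ⟨starProfile Id L u (vertexLoad N Id L k u / ∑ l ∈ Id, k l / L l),
    isGeneralMixedStarSolution_starProfile hId hL hu hfu (div_mul_cancel₀ _ hres),
    fun φ hφ j hj x hx => ?_⟩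
  rw [hφ.eqOn_starProfile hL hk hu hfu hj j hj hx,
    eq_div_of_mul_eq hres (hφ.vertex_mul_eq_vertexLoad hId hL hk hu hfu hj)]

/-- Well-posedness for a general star network with mixed boundary conditions
(Corollary 3.2): `Id` is the set of edges carrying a Dirichlet condition at their
external vertex, and the problem is well-posed provided `∑_{l ∈ Id} k l / L l ≠ 0`. -/
theorem stmt_7 (N : ℕ) (hN : 1 ≤ N) (Id : Finset ℕ) (hId : Id ⊆ Finset.Icc 1 N)
    (hIdne : Id.Nonempty)
    (L : ℕ → ℝ) (hL : ∀ j ∈ Finset.Icc 1 N, 0 < L j)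
    (k : ℕ → ℝ) (hk : ∀ j ∈ Finset.Icc 1 N, k j ≠ 0)
    (hres : ∑ l ∈ Id, k l / L l ≠ 0)
    (f : ℕ → ℝ → ℝ) (hf : ∀ j ∈ Finset.Icc 1 N, ContinuousOn (f j) (Set.Icc 0 (L j))) :
    ∃ ψ : ℕ → ℝ → ℝ, IsGeneralMixedStarSolution N Id L k f ψ ∧
      ∀ φ : ℕ → ℝ → ℝ, IsGeneralMixedStarSolution N Id L k f φ →
        ∀ j ∈ Finset.Icc 1 N, ∀ x ∈ Set.Icc (0 : ℝ) (L j), φ j x = ψ j x :=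
  stmt_7_general N Id hId L hL k hk hres f hf
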